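/- arXiv:cond-mat/9512169 — 2 statements merged into one kernel-verified Lean document; each statement's English description precedes it below -/
import Mathlib

section
/- Twist-operator energy estimate (finite-volume step of the Yamanaka–Oshikawa–Affleck theorem). Consider the Hubbard model on the periodic chain Λ = {1, …, N} with t_{x,y} = 0 whenever the distance between x and y on the ring exceeds a fixed range R, and with |t_{x,y}| ≤ t̄ for all x, y. Let Φ_GS be any normalized ground state of H in the sector with N̂_e = N_e, with ground energy E_GS, and let U_tw = exp[2πi Σ_{x=1}^{N} (x/N) n_{x,↑}] be the unitary twist operator. Then the normalized state Ψ = U_tw Φ_GS satisfies ⟨Ψ, H Ψ⟩ − E_GS ≤ C/N, where the constant C depends only on R, t̄, and the density ν = N_e/N, and not otherwise on N. -/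
/-!  Common framework: the Hubbard model on a finite lattice, formalized
concretely on the fermionic Fock space realized as `Finset (Λ × Bool) → ℂ`. -/

noncomputable section
namespace Hubbard

open scoped BigOperators

variable (Λ : Type*) [Fintype Λ] [LinearOrder Λ]

/-- Spin indices: `true` = ↑, `false` = ↓. -/
abbrev Spin := Bool

/-- The fermionic Fock space over the set of modes `Λ × Spin`,
realized concretely in the occupation-number basis. -/
abbrev FockSpace := Finset (Λ × Spin) → ℂ

variable {Λ}

/-- An auxiliary (lexicographic) strict order on modes, fixing the sign
convention of the fermionic operators. -/
def mlt (j i : Λ × Spin) : Prop := j.1 < i.1 ∨ (j.1 = i.1 ∧ j.2 < i.2)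

instance (i : Λ × Spin) : DecidablePred (fun j => mlt j i) := fun j =>
  inferInstanceAs (Decidable (j.1 < i.1 ∨ (j.1 = i.1 ∧ j.2 < i.2)))

/-- The fermionic sign `(-1)^{#{j ∈ S : j < i}}`. -/
def sgn (i : Λ × Spin) (S : Finset (Λ × Spin)) : ℂ :=
  (-1 : ℂ) ^ (S.filter (fun j => mlt j i)).card

/-- The annihilation operator `c_{x,σ}` for the mode `i = (x,σ)`. -/
def cop (i : Λ × Spin) : Module.End ℂ (FockSpace Λ) where
  toFun ψ := fun S => if i ∈ S then 0 else sgn i S * ψ (insert i S)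
  map_add' ψ φ := by funext S; by_cases h : i ∈ S <;> simp [h, mul_add]
  map_smul' a ψ := by
    funext S; by_cases h : i ∈ S <;> simp [h]
    ring
/-- The creation operator `c†_{x,σ}` for the mode `i = (x,σ)`. -/
def cdag (i : Λ × Spin) : Module.End ℂ (FockSpace Λ) where
  toFun ψ := fun S => if i ∈ S then sgn i (S.erase i) * ψ (S.erase i) else 0
  map_add' ψ φ := by funext S; by_cases h : i ∈ S <;> simp [h, mul_add]
  map_smul' a ψ := by
    funext S; by_cases h : i ∈ S <;> simp [h]
    ring

/-- The number operator `n_{x,σ} = c†_{x,σ} c_{x,σ}`. -/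
def nop (i : Λ × Spin) : Module.End ℂ (FockSpace Λ) := cdag i ∘ₗ cop i

/-- The total electron number operator `N̂_e`. -/
def Nhat : Module.End ℂ (FockSpace Λ) := ∑ i : Λ × Spin, nop i

/-- The number operator of up-spin electrons, `N̂_↑`. -/
def NhatUp : Module.End ℂ (FockSpace Λ) := ∑ x : Λ, nop (x, true)

/-- The hopping Hamiltonian `H_hop = Σ_{x,y,σ} t_{x,y} c†_{x,σ} c_{y,σ}`. -/
def Hhop (t : Λ → Λ → ℝ) : Module.End ℂ (FockSpace Λ) :=
  ∑ x : Λ, ∑ y : Λ, ∑ σ : Spin, (t x y : ℂ) • (cdag (x, σ) ∘ₗ cop (y, σ))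

/-- The interaction Hamiltonian `H_int = Σ_x U_x n_{x,↑} n_{x,↓}`. -/
def Hint (U : Λ → ℝ) : Module.End ℂ (FockSpace Λ) :=
  ∑ x : Λ, (U x : ℂ) • (nop (x, true) ∘ₗ nop (x, false))

/-- The Hubbard Hamiltonian `H = H_hop + H_int`. -/
def Ham (t : Λ → Λ → ℝ) (U : Λ → ℝ) : Module.End ℂ (FockSpace Λ) := Hhop t + Hint U

/-- The Pauli matrices `p^(α)`, `α = 1,2,3` (here indexed by `Fin 3`);
rows/columns indexed by spins (`true` = ↑ first). -/
def pauli (α : Fin 3) (s τ : Spin) : ℂ :=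
  if α = 0 then (if s = τ then 0 else 1)
  else if α = 1 then (if s = τ then 0 else if s then -Complex.I else Complex.I)
  else (if s = τ then (if s then 1 else -1) else 0)

/-- The local spin operator `S^(α)_x = (1/2) Σ_{σ,τ} c†_{x,σ} (p^(α))_{σ,τ} c_{x,τ}`. -/
def spinOp (α : Fin 3) (x : Λ) : Module.End ℂ (FockSpace Λ) :=
  (1 / 2 : ℂ) • ∑ s : Spin, ∑ τ : Spin, pauli α s τ • (cdag (x, s) ∘ₗ cop (x, τ))

/-- The total spin operator `S^(α)_tot`. -/
def Stot (α : Fin 3) : Module.End ℂ (FockSpace Λ) := ∑ x : Λ, spinOp α x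

/-- The squared total spin `(Ŝ_tot)²`. -/
def StotSq : Module.End ℂ (FockSpace Λ) := ∑ α : Fin 3, Stot α ∘ₗ Stot α

/-- The spin-spin coupling `Ŝ_x · Ŝ_y`. -/
def SdotS (x y : Λ) : Module.End ℂ (FockSpace Λ) := ∑ α : Fin 3, spinOp α x ∘ₗ spinOp α y

/-- The inner product on the Fock space. -/
def fdot (ψ φ : FockSpace Λ) : ℂ := ∑ S : Finset (Λ × Spin), (starRingEnd ℂ) (ψ S) * φ S

/-- The vacuum vector `Φ_vac`. -/
def vac : FockSpace Λ := fun S => if S = ∅ then 1 else 0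

/-- The eigenspace of an operator for a real eigenvalue. -/
def eigR (A : Module.End ℂ (FockSpace Λ)) (μ : ℝ) : Submodule ℂ (FockSpace Λ) :=
  Module.End.eigenspace A (μ : ℂ)

/-- The simultaneous eigenspace: energy `E` within the `N_e`-electron sector. -/
def sector (H : Module.End ℂ (FockSpace Λ)) (Ne : ℕ) (E : ℝ) : Submodule ℂ (FockSpace Λ) :=
  eigR H E ⊓ eigR Nhat (Ne : ℝ)

/-- The set of energy eigenvalues in the `N_e`-electron sector. -/
def energies (H : Module.End ℂ (FockSpace Λ)) (Ne : ℕ) : Set ℝ :=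
  {E | sector H Ne E ≠ ⊥}

/-- The ground-state energy in the `N_e`-electron sector. -/
def groundEnergy (H : Module.End ℂ (FockSpace Λ)) (Ne : ℕ) : ℝ := sInf (energies H Ne)

/-- The space of ground states in the `N_e`-electron sector. -/
def groundSpace (H : Module.End ℂ (FockSpace Λ)) (Ne : ℕ) : Submodule ℂ (FockSpace Λ) :=
  sector H Ne (groundEnergy H Ne)

/-- `E_min(S)`: the lowest energy among states with `N̂_e = N_e` and total spin `S`,
i.e. `(Ŝ_tot)² = S(S+1)`. -/
def Emin (H : Module.End ℂ (FockSpace Λ)) (Ne : ℕ) (S : ℝ) : ℝ :=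
  sInf {E : ℝ | eigR H E ⊓ eigR Nhat (Ne : ℝ) ⊓ eigR StotSq (S * (S + 1)) ≠ ⊥}

/-- The orthogonal projection onto the hard-core subspace (no doubly occupied sites). -/
def hcProj : Module.End ℂ (FockSpace Λ) where
  toFun ψ := fun S => if ∃ x : Λ, (x, true) ∈ S ∧ (x, false) ∈ S then 0 else ψ S
  map_add' ψ φ := by
    funext S; by_cases h : ∃ x : Λ, (x, true) ∈ S ∧ (x, false) ∈ S <;> simp [h]
  map_smul' a ψ := by
    funext S; by_cases h : ∃ x : Λ, (x, true) ∈ S ∧ (x, false) ∈ S <;> simp [h]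

/-- The `U = ∞` (hard-core) Hamiltonian `H_∞ = P H_hop P`. -/
def Hinf (t : Λ → Λ → ℝ) : Module.End ℂ (FockSpace Λ) := hcProj ∘ₗ Hhop t ∘ₗ hcProj

/-- Energy-`E` eigenspace inside the `N_e`-electron hard-core subspace. -/
def hcSector (H : Module.End ℂ (FockSpace Λ)) (Ne : ℕ) (E : ℝ) : Submodule ℂ (FockSpace Λ) :=
  eigR H E ⊓ eigR Nhat (Ne : ℝ) ⊓ eigR hcProj 1

/-- Energy eigenvalues in the `N_e`-electron hard-core subspace. -/
def hcEnergies (H : Module.End ℂ (FockSpace Λ)) (Ne : ℕ) : Set ℝ := {E | hcSector H Ne E ≠ ⊥}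

/-- Ground energy in the `N_e`-electron hard-core subspace. -/
def hcGroundEnergy (H : Module.End ℂ (FockSpace Λ)) (Ne : ℕ) : ℝ := sInf (hcEnergies H Ne)

/-- Ground states in the `N_e`-electron hard-core subspace. -/
def hcGroundSpace (H : Module.End ℂ (FockSpace Λ)) (Ne : ℕ) : Submodule ℂ (FockSpace Λ) :=
  hcSector H Ne (hcGroundEnergy H Ne)

/-- The orthogonal projection onto the `N_e`-electron sector. -/
def numProj (Ne : ℕ) : Module.End ℂ (FockSpace Λ) where
  toFun ψ := fun S => if S.card = Ne then ψ S else 0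
  map_add' ψ φ := by funext S; by_cases h : S.card = Ne <;> simp [h]
  map_smul' a ψ := by funext S; by_cases h : S.card = Ne <;> simp [h]

/-- The matrix of an operator in the occupation-number basis. -/
def toMat (A : Module.End ℂ (FockSpace Λ)) :
    Matrix (Finset (Λ × Spin)) (Finset (Λ × Spin)) ℂ :=
  LinearMap.toMatrix (Pi.basisFun ℂ (Finset (Λ × Spin)))
    (Pi.basisFun ℂ (Finset (Λ × Spin))) A

/-- The canonical Gibbs expectation `Tr[A e^{-βH}]/Tr[e^{-βH}]`, the traces being taken
over the `N_e`-electron sector (realized with the projection `numProj Ne`). -/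
def canonExpect (H : Module.End ℂ (FockSpace Λ)) (β : ℝ) (Ne : ℕ)
    (A : Module.End ℂ (FockSpace Λ)) : ℂ :=
  Matrix.trace (toMat (numProj Ne ∘ₗ A ∘ₗ numProj Ne) *
      NormedSpace.exp ((-β : ℂ) • toMat (numProj Ne ∘ₗ H ∘ₗ numProj Ne))) /
    Matrix.trace (toMat (numProj Ne) *
      NormedSpace.exp ((-β : ℂ) • toMat (numProj Ne ∘ₗ H ∘ₗ numProj Ne)))

/-- The pair operator `c†_{x,↑} c†_{x,↓} c_{y,↑} c_{y,↓} + h.c.`. -/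
def pairOp (x y : Λ) : Module.End ℂ (FockSpace Λ) :=
  cdag (x, true) ∘ₗ cdag (x, false) ∘ₗ cop (y, true) ∘ₗ cop (y, false) +
    cdag (y, false) ∘ₗ cdag (y, true) ∘ₗ cop (x, false) ∘ₗ cop (x, true)


/-- The unitary twist operator
`U_tw = exp[2πi Σ_{x=1}^{N} (x/N) n_{x,↑}]` on the chain `{1, …, N}` (realized as
`Fin N`, the site `x` corresponding to the index of value `x − 1`); it is diagonal
in the occupation-number basis. -/
def Utw (N : ℕ) : Module.End ℂ (FockSpace (Fin N)) where
  toFun ψ := fun S =>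
    Complex.exp (2 * Real.pi * Complex.I *
        (∑ m ∈ S.filter (fun m => m.2 = true), ((m.1.val : ℂ) + 1)) / N) * ψ S
  map_add' ψ φ := by funext S; simp [mul_add]
  map_smul' a ψ := by funext S; simp; ring

/-!
Twisting by the angles `θ_x = 2π(x+1)/N` multiplies the up-spin hopping term `c†_{x↑} c_{y↑}` by
`e^{i(θ_y - θ_x)}` and leaves `H_int` and `N̂_e` untouched. Hence the energies of `U_tw Φ` and
`U_tw⁻¹ Φ` add up to `2 E_GS + Σ t_{xy} (2 cos(θ_y - θ_x) - 2) ⟨c†_{x↑} c_{y↑}⟩`. The state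
`U_tw⁻¹ Φ` lies in the `N_e`-electron sector, so by the variational principle its energy is at least
`E_GS`; and each of the at most `N(2R+1)` nonzero terms of the sum is bounded by `t̄ (2πR/N)²`.
-/

set_option linter.unusedSectionVars false

open scoped ComplexConjugate InnerProductSpace

lemma _root_.LinearMap.IsSymmetric.mul_norm_sq_le_re_inner_map_self {𝕜 E : Type*} [RCLike 𝕜]
    [NormedAddCommGroup E] [InnerProductSpace 𝕜 E] [FiniteDimensional 𝕜 E]
    {T : E →ₗ[𝕜] E} (hT : T.IsSymmetric) {c : ℝ}
    (hc : ∀ (μ : ℝ) (v : E), v ≠ 0 → T v = (μ : 𝕜) • v → c ≤ μ) (ψ : E) :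
    c * ‖ψ‖ ^ 2 ≤ RCLike.re ⟪ψ, T ψ⟫_𝕜 := by
  set b := hT.eigenvectorBasis rfl
  set μ := hT.eigenvalues rfl
  have hb : ∀ i, T (b i) = (μ i : 𝕜) • b i := hT.apply_eigenvectorBasis rfl
  have hexpand : ⟪ψ, T ψ⟫_𝕜 = ∑ i, (μ i : 𝕜) * (‖⟪b i, ψ⟫_𝕜‖ ^ 2 : ℝ) := by
    rw [← b.sum_inner_mul_inner]
    refine Finset.sum_congr rfl fun i _ => ?_
    rw [← hT, hb, inner_smul_left, RCLike.conj_ofReal, ← inner_conj_symm ψ, RCLike.ofReal_pow,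
      ← RCLike.conj_mul]
    ring
  rw [hexpand, map_sum, ← b.sum_sq_norm_inner_right, Finset.mul_sum]
  refine Finset.sum_le_sum fun i _ => ?_
  rw [← RCLike.ofReal_mul, RCLike.ofReal_re]
  exact mul_le_mul_of_nonneg_right (hc _ _ (b.orthonormal.ne_zero i) (hb i)) (by positivity)

lemma sgn_mul_self (i : Λ × Spin) (S : Finset (Λ × Spin)) : sgn i S * sgn i S = 1 := by
  rw [sgn, ← pow_add, ← two_mul, pow_mul]
  simp

lemma conj_sgn (i : Λ × Spin) (S : Finset (Λ × Spin)) : conj (sgn i S) = sgn i S := by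
  simp [sgn]

lemma cop_apply (i : Λ × Spin) (ψ : FockSpace Λ) (S : Finset (Λ × Spin)) :
    cop i ψ S = if i ∈ S then 0 else sgn i S * ψ (insert i S) := rfl

lemma cdag_apply (i : Λ × Spin) (ψ : FockSpace Λ) (S : Finset (Λ × Spin)) :
    cdag i ψ S = if i ∈ S then sgn i (S.erase i) * ψ (S.erase i) else 0 := rfl

lemma hop_apply (i j : Λ × Spin) (ψ : FockSpace Λ) (S : Finset (Λ × Spin)) :
    (cdag i ∘ₗ cop j) ψ S =
      if i ∈ S ∧ j ∉ S.erase i then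
        sgn i (S.erase i) * sgn j (S.erase i) * ψ (insert j (S.erase i))
      else 0 := by
  rw [LinearMap.comp_apply, cdag_apply]
  by_cases hi : i ∈ S
  · by_cases hj : j ∈ S.erase i <;> simp [cop_apply, hi, hj, mul_assoc]
  · simp [hi]

lemma nop_apply (i : Λ × Spin) (ψ : FockSpace Λ) (S : Finset (Λ × Spin)) :
    nop i ψ S = if i ∈ S then ψ S else 0 := by
  rw [nop, hop_apply]
  by_cases hi : i ∈ S
  · simp [hi, Finset.insert_erase hi, sgn_mul_self]
  · simp [hi]

lemma Nhat_apply (ψ : FockSpace Λ) (S : Finset (Λ × Spin)) :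
    Nhat ψ S = S.card * ψ S := by
  simp only [Nhat, LinearMap.sum_apply, Finset.sum_apply, nop_apply, Finset.sum_ite_mem,
    Finset.univ_inter, Finset.sum_const, nsmul_eq_mul]

lemma Hint_apply (U : Λ → ℝ) (ψ : FockSpace Λ) (S : Finset (Λ × Spin)) :
    Hint U ψ S =
      (∑ x : Λ, if (x, true) ∈ S ∧ (x, false) ∈ S then (U x : ℂ) else 0) * ψ S := by
  rw [Hint, LinearMap.sum_apply, Finset.sum_apply, Finset.sum_mul]
  refine Finset.sum_congr rfl fun x _ => ?_
  by_cases h1 : (x, true) ∈ S <;> by_cases h2 : (x, false) ∈ S <;>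
    simp [nop_apply, h1, h2]

lemma fdot_eq_inner (ψ φ : FockSpace Λ) :
    fdot ψ φ = ⟪WithLp.toLp 2 ψ, WithLp.toLp 2 φ⟫_ℂ := by
  simp [fdot, PiLp.inner_apply, mul_comm]

lemma conj_fdot (ψ φ : FockSpace Λ) : conj (fdot ψ φ) = fdot φ ψ := by
  rw [fdot_eq_inner, fdot_eq_inner, inner_conj_symm]

lemma fdot_add_right (ψ φ₁ φ₂ : FockSpace Λ) :
    fdot ψ (φ₁ + φ₂) = fdot ψ φ₁ + fdot ψ φ₂ := by
  simp only [fdot_eq_inner, WithLp.toLp_add, inner_add_right]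

lemma fdot_add_left (ψ₁ ψ₂ φ : FockSpace Λ) :
    fdot (ψ₁ + ψ₂) φ = fdot ψ₁ φ + fdot ψ₂ φ := by
  simp only [fdot_eq_inner, WithLp.toLp_add, inner_add_left]

lemma fdot_smul_right (c : ℂ) (ψ φ : FockSpace Λ) : fdot ψ (c • φ) = c * fdot ψ φ := by
  simp only [fdot_eq_inner, WithLp.toLp_smul, inner_smul_right]

lemma fdot_sum_right {κ : Type*} (s : Finset κ) (ψ : FockSpace Λ) (f : κ → FockSpace Λ) :
    fdot ψ (∑ k ∈ s, f k) = ∑ k ∈ s, fdot ψ (f k) := by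
  simp only [fdot_eq_inner, WithLp.toLp_sum, inner_sum]

lemma fdot_cdag (i : Λ × Spin) (ψ χ : FockSpace Λ) :
    fdot ψ (cdag i χ) = fdot (cop i ψ) χ := by
  simp only [fdot, cdag_apply, cop_apply, apply_ite conj, map_zero, mul_ite, ite_mul, mul_zero,
    zero_mul, Finset.sum_ite, Finset.sum_const_zero, add_zero, zero_add]
  refine Finset.sum_nbij' (fun S => S.erase i) (insert i) ?_ ?_ ?_ ?_ ?_ <;>
    intro S hS <;> simp only [Finset.mem_filter, Finset.mem_univ, true_and] at hS
  · simp
  · simp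
  · exact Finset.insert_erase hS
  · exact Finset.erase_insert hS
  · rw [Finset.insert_erase hS, map_mul, conj_sgn]
    ring

lemma fdot_hop (i j : Λ × Spin) (ψ φ : FockSpace Λ) :
    fdot ψ ((cdag i ∘ₗ cop j) φ) = fdot (cop i ψ) (cop j φ) :=
  fdot_cdag i ψ (cop j φ)

lemma fdot_Hhop (t : Λ → Λ → ℝ) (ψ φ : FockSpace Λ) :
    fdot ψ (Hhop t φ) =
      ∑ x : Λ, ∑ y : Λ, ∑ σ : Spin, (t x y : ℂ) * fdot ψ ((cdag (x, σ) ∘ₗ cop (y, σ)) φ) := by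
  simp only [Hhop, LinearMap.sum_apply, LinearMap.smul_apply, fdot_sum_right, fdot_smul_right]

lemma fdot_Ham (t : Λ → Λ → ℝ) (U : Λ → ℝ) (ψ φ : FockSpace Λ) :
    fdot ψ (Ham t U φ) = fdot ψ (Hhop t φ) + fdot ψ (Hint U φ) := by
  rw [Ham, LinearMap.add_apply, fdot_add_right]

lemma fdot_Hhop_symm (t : Λ → Λ → ℝ) (ht : ∀ x y, t x y = t y x) (ψ φ : FockSpace Λ) :
    fdot (Hhop t ψ) φ = fdot ψ (Hhop t φ) := by
  rw [← conj_fdot, fdot_Hhop, fdot_Hhop, Finset.sum_comm]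
  simp only [map_sum, map_mul, Complex.conj_ofReal, fdot_hop, conj_fdot, ht]

lemma fdot_Hint_symm (U : Λ → ℝ) (ψ φ : FockSpace Λ) :
    fdot (Hint U ψ) φ = fdot ψ (Hint U φ) := by
  refine Finset.sum_congr rfl fun S _ => ?_
  simp only [Hint_apply, map_mul, map_sum, apply_ite conj, Complex.conj_ofReal, map_zero]
  ring

lemma fdot_Ham_symm (t : Λ → Λ → ℝ) (U : Λ → ℝ) (ht : ∀ x y, t x y = t y x)
    (ψ φ : FockSpace Λ) : fdot (Ham t U ψ) φ = fdot ψ (Ham t U φ) := by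
  rw [Ham, LinearMap.add_apply, fdot_add_left, ← Ham, fdot_Ham, fdot_Hhop_symm t ht, fdot_Hint_symm]

lemma re_fdot_nop_le (i : Λ × Spin) (ψ : FockSpace Λ) :
    (fdot ψ (nop i ψ)).re ≤ (fdot ψ ψ).re := by
  simp only [fdot, nop_apply, Complex.re_sum]
  refine Finset.sum_le_sum fun S _ => ?_
  split_ifs
  · exact le_rfl
  · simp [Complex.conj_mul', ← Complex.ofReal_pow]

lemma norm_toLp_cop_le (i : Λ × Spin) (ψ : FockSpace Λ) :
    ‖WithLp.toLp 2 (cop i ψ)‖ ≤ ‖WithLp.toLp 2 ψ‖ := by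
  rw [← pow_le_pow_iff_left₀ (norm_nonneg _) (norm_nonneg _) two_ne_zero,
    ← inner_self_eq_norm_sq (𝕜 := ℂ), ← inner_self_eq_norm_sq (𝕜 := ℂ), ← fdot_eq_inner,
    ← fdot_eq_inner, ← fdot_hop]
  exact re_fdot_nop_le i ψ

lemma norm_fdot_hop_le (i j : Λ × Spin) (ψ : FockSpace Λ) :
    ‖fdot ψ ((cdag i ∘ₗ cop j) ψ)‖ ≤ (fdot ψ ψ).re := by
  rw [fdot_hop, fdot_eq_inner, fdot_eq_inner, ← RCLike.re_to_complex, inner_self_eq_norm_sq]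
  calc _ ≤ ‖WithLp.toLp 2 (cop i ψ)‖ * ‖WithLp.toLp 2 (cop j ψ)‖ := norm_inner_le_norm _ _
    _ ≤ ‖WithLp.toLp 2 ψ‖ ^ 2 := by
      rw [sq]; gcongr <;> exact norm_toLp_cop_le _ ψ

lemma mem_eigR_Nhat_iff (ψ : FockSpace Λ) (Ne : ℕ) :
    ψ ∈ eigR Nhat (Ne : ℝ) ↔ ∀ S : Finset (Λ × Spin), S.card ≠ Ne → ψ S = 0 := by
  simp only [eigR, Module.End.mem_eigenspace_iff, funext_iff, Nhat_apply, Pi.smul_apply,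
    smul_eq_mul, Complex.ofReal_natCast, mul_eq_mul_right_iff, Nat.cast_inj, or_iff_not_imp_left]

lemma hop_mem_eigR_Nhat (i j : Λ × Spin) {Ne : ℕ} {ψ : FockSpace Λ}
    (hψ : ψ ∈ eigR Nhat (Ne : ℝ)) : (cdag i ∘ₗ cop j) ψ ∈ eigR Nhat (Ne : ℝ) := by
  rw [mem_eigR_Nhat_iff] at hψ ⊢
  intro S hS
  rw [hop_apply]
  split_ifs with h
  · have hcard : (insert j (S.erase i)).card = S.card := by
      rw [Finset.card_insert_of_notMem h.2, Finset.card_erase_add_one h.1]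
    rw [hψ _ (hcard ▸ hS), mul_zero]
  · rfl

lemma Ham_mem_eigR_Nhat (t : Λ → Λ → ℝ) (U : Λ → ℝ) {Ne : ℕ} {ψ : FockSpace Λ}
    (hψ : ψ ∈ eigR Nhat (Ne : ℝ)) : Ham t U ψ ∈ eigR Nhat (Ne : ℝ) := by
  simp only [Ham, Hhop, Hint, nop, LinearMap.add_apply, LinearMap.sum_apply,
    LinearMap.smul_apply]
  refine add_mem (Submodule.sum_mem _ fun x _ => Submodule.sum_mem _ fun y _ =>
    Submodule.sum_mem _ fun σ _ => Submodule.smul_mem _ _ (hop_mem_eigR_Nhat _ _ hψ))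
    (Submodule.sum_mem _ fun x _ => Submodule.smul_mem _ _ ?_)
  exact hop_mem_eigR_Nhat _ _ (hop_mem_eigR_Nhat _ _ hψ)

lemma mul_re_fdot_self_le_re_fdot_Ham {t : Λ → Λ → ℝ} {U : Λ → ℝ} {Ne : ℕ} {Egs : ℝ}
    (ht : ∀ x y, t x y = t y x) (hgs : ∀ E' ∈ energies (Ham t U) Ne, Egs ≤ E')
    {ψ : FockSpace Λ} (hψ : ψ ∈ eigR Nhat (Ne : ℝ)) :
    Egs * (fdot ψ ψ).re ≤ (fdot ψ (Ham t U ψ)).re := by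
  -- `FockSpace Λ` carries the sup norm: the spectral theorem is applied on its `L²` copy,
  -- to `H` restricted to the `N_e`-electron sector
  let e : FockSpace Λ ≃ₗ[ℂ] EuclideanSpace ℂ (Finset (Λ × Spin)) :=
    (WithLp.linearEquiv 2 ℂ (FockSpace Λ)).symm
  let V : Submodule ℂ (EuclideanSpace ℂ (Finset (Λ × Spin))) :=
    (eigR Nhat (Ne : ℝ)).map e.toLinearMap
  let T : EuclideanSpace ℂ (Finset (Λ × Spin)) →ₗ[ℂ] EuclideanSpace ℂ (Finset (Λ × Spin)) :=
    e.conj (Ham t U)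
  have hV : ∀ v ∈ V, T v ∈ V := by
    rintro _ ⟨φ, hφ, rfl⟩
    exact ⟨_, Ham_mem_eigR_Nhat t U hφ, by simp [T]⟩
  have hT : LinearMap.IsSymmetric (𝕜 := ℂ) (E := V) (T.restrict hV) := fun v w => by
    simpa [fdot_eq_inner, e, T] using fdot_Ham_symm t U ht (v : EuclideanSpace ℂ _).ofLp
      (w : EuclideanSpace ℂ _).ofLp
  have key := LinearMap.IsSymmetric.mul_norm_sq_le_re_inner_map_self hT (c := Egs) ?_
    ⟨e ψ, ψ, hψ, rfl⟩
  · simpa [fdot_eq_inner, ← inner_self_eq_norm_sq (𝕜 := ℂ), e, T] using key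
  · rintro μ ⟨_, φ, hφ, rfl⟩ hne hμ
    refine hgs μ (Submodule.ne_bot_iff _ |>.mpr ⟨φ, ⟨?_, hφ⟩, ?_⟩)
    · rw [SetLike.mem_coe, eigR, Module.End.mem_eigenspace_iff]
      exact WithLp.toLp_injective 2 (by simpa [T, e, Subtype.ext_iff] using hμ)
    · rintro rfl
      exact hne (by simp)

def upPhase (θ : Λ → ℝ) (S : Finset (Λ × Spin)) : ℂ :=
  Complex.exp ((∑ m ∈ S.filter (fun m => m.2 = true), θ m.1 : ℝ) * Complex.I)

def twist (θ : Λ → ℝ) (ψ : FockSpace Λ) : FockSpace Λ := fun S => upPhase θ S * ψ S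

def hopPhase (θ : Λ → ℝ) (x y : Λ) (σ : Spin) : ℂ :=
  if σ then Complex.exp ((θ y - θ x : ℝ) * Complex.I) else 1

lemma conj_upPhase_mul_self (θ : Λ → ℝ) (S : Finset (Λ × Spin)) :
    conj (upPhase θ S) * upPhase θ S = 1 := by
  rw [Complex.conj_mul', upPhase, Complex.norm_exp_ofReal_mul_I, Complex.ofReal_one, one_pow]

lemma conj_upPhase_mul_mul (θ : Λ → ℝ) (S : Finset (Λ × Spin)) (a b : ℂ) :
    conj (upPhase θ S * a) * (upPhase θ S * b) = conj a * b := by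
  rw [map_mul]
  linear_combination (conj a * b) * conj_upPhase_mul_self θ S

lemma upPhase_hop (θ : Λ → ℝ) {x y : Λ} {σ : Spin} {S : Finset (Λ × Spin)}
    (hx : (x, σ) ∈ S) (hy : (y, σ) ∉ S.erase (x, σ)) :
    upPhase θ (insert (y, σ) (S.erase (x, σ))) = hopPhase θ x y σ * upPhase θ S := by
  cases σ with
  | false =>
    simp [upPhase, hopPhase, Finset.filter_insert, Finset.filter_erase]
  | true =>
    have hsum : ∑ m ∈ (insert (y, true) (S.erase (x, true))).filter (fun m => m.2 = true), θ m.1 =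
        θ y - θ x + ∑ m ∈ S.filter (fun m => m.2 = true), θ m.1 := by
      rw [Finset.filter_insert, if_pos rfl, Finset.filter_erase, Finset.sum_insert
        (fun h => hy (Finset.erase_subset_erase _ (Finset.filter_subset _ _) h)),
        Finset.sum_erase_eq_sub (Finset.mem_filter.mpr ⟨hx, rfl⟩ :
          (x, true) ∈ S.filter (fun m => m.2 = true))]
      ring
    rw [upPhase, upPhase, hopPhase, hsum, if_pos rfl, ← Complex.exp_add]
    push_cast
    ring_nf

lemma fdot_twist (θ : Λ → ℝ) (ψ φ : FockSpace Λ) : fdot (twist θ ψ) (twist θ φ) = fdot ψ φ :=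
  Finset.sum_congr rfl fun S _ => conj_upPhase_mul_mul θ S _ _

lemma hop_twist (θ : Λ → ℝ) (ψ : FockSpace Λ) (x y : Λ) (σ : Spin) :
    (cdag (x, σ) ∘ₗ cop (y, σ)) (twist θ ψ) =
      twist θ (hopPhase θ x y σ • (cdag (x, σ) ∘ₗ cop (y, σ)) ψ) := by
  funext S
  simp only [hop_apply, twist, Pi.smul_apply, smul_eq_mul]
  split_ifs with h
  · rw [upPhase_hop θ h.1 h.2]
    ring
  · simp

lemma Hint_twist (θ : Λ → ℝ) (ψ : FockSpace Λ) (U : Λ → ℝ) :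
    Hint U (twist θ ψ) = twist θ (Hint U ψ) := by
  funext S
  simp only [Hint_apply, twist]
  ring

lemma fdot_twist_hop (θ : Λ → ℝ) (ψ : FockSpace Λ) (x y : Λ) (σ : Spin) :
    fdot (twist θ ψ) ((cdag (x, σ) ∘ₗ cop (y, σ)) (twist θ ψ)) =
      hopPhase θ x y σ * fdot ψ ((cdag (x, σ) ∘ₗ cop (y, σ)) ψ) := by
  rw [hop_twist, fdot_twist, fdot_smul_right]

lemma twist_mem_eigR_Nhat (θ : Λ → ℝ) {Ne : ℕ} {ψ : FockSpace Λ}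
    (hψ : ψ ∈ eigR Nhat (Ne : ℝ)) : twist θ ψ ∈ eigR Nhat (Ne : ℝ) := by
  rw [mem_eigR_Nhat_iff] at hψ ⊢
  intro S hS
  rw [twist, hψ S hS, mul_zero]

lemma hopPhase_add_hopPhase_neg (θ : Λ → ℝ) (x y : Λ) :
    hopPhase θ x y true + hopPhase (-θ) x y true = 2 * (Real.cos (θ y - θ x) : ℂ) := by
  simp only [hopPhase, if_true, Pi.neg_apply, Complex.ofReal_cos, Complex.two_cos]
  push_cast
  ring_nf

lemma fdot_twist_Ham_add_fdot_twist_neg_Ham (t : Λ → Λ → ℝ) (U : Λ → ℝ) (θ : Λ → ℝ)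
    (ψ : FockSpace Λ) :
    fdot (twist θ ψ) (Ham t U (twist θ ψ)) + fdot (twist (-θ) ψ) (Ham t U (twist (-θ) ψ)) -
        2 * fdot ψ (Ham t U ψ) =
      ∑ x, ∑ y, (t x y : ℂ) * ((2 * Real.cos (θ y - θ x) - 2 : ℝ) *
        fdot ψ ((cdag (x, true) ∘ₗ cop (y, true)) ψ)) := by
  have hcancel : ∀ a b c h : ℂ, a + h + (b + h) - 2 * (c + h) = a + b - 2 * c :=
    fun _ _ _ _ => by ring
  simp only [fdot_Ham, fdot_Hhop, fdot_twist_hop, Hint_twist, fdot_twist, hcancel,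
    Finset.mul_sum, ← Finset.sum_add_distrib, ← Finset.sum_sub_distrib]
  refine Finset.sum_congr rfl fun x _ => Finset.sum_congr rfl fun y _ => ?_
  rw [Fintype.sum_bool, Complex.ofReal_sub, Complex.ofReal_mul, Complex.ofReal_ofNat,
    ← hopPhase_add_hopPhase_neg]
  simp only [hopPhase, Bool.false_eq_true, if_false]
  ring

lemma _root_.Nat.cast_dist {α : Type*} [CommRing α] [LinearOrder α] [IsStrictOrderedRing α]
    (a b : ℕ) : (Nat.dist a b : α) = |(a : α) - b| := by
  rcases le_total a b with h | h
  · rw [Nat.dist_eq_sub_of_le h, Nat.cast_sub h, abs_sub_comm, abs_of_nonneg (by simpa)]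
  · rw [Nat.dist_eq_sub_of_le_right h, Nat.cast_sub h, abs_of_nonneg (by simpa)]

def ringDist (N a b : ℕ) : ℕ := min (Nat.dist a b) (N - Nat.dist a b)

lemma card_filter_ringDist_le (N R : ℕ) (x : Fin N) :
    (Finset.univ.filter fun y : Fin N => ringDist N x y ≤ R).card ≤ 2 * R + 1 := by
  by_cases hNR : N ≤ 2 * R
  · exact (Finset.card_filter_le _ _).trans (by simp; omega)
  have hN : 0 < N := by omega
  -- `y ↦ (y - x + R) mod N` is injective and sends the `R`-neighbourhood of `x` into `[0, 2R]`
  set f : Fin N → ℕ := fun y => (y.val + (N - x.val + R)) % N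
  have hf : ∀ y ∈ Finset.univ.filter fun y : Fin N => ringDist N x y ≤ R,
      f y ∈ Finset.range (2 * R + 1) := by
    intro y hy
    have hxy : ringDist N x y ≤ R := (Finset.mem_filter.1 hy).2
    unfold ringDist Nat.dist at hxy
    have hq : (y.val + (N - x.val + R)) / N < 3 := (Nat.div_lt_iff_lt_mul hN).2 (by omega)
    have hdiv := Nat.div_add_mod (y.val + (N - x.val + R)) N
    have hmod := Nat.mod_lt (y.val + (N - x.val + R)) hN
    have hx := x.isLt
    have hy' := y.isLt
    simp only [Finset.mem_range, f]
    generalize (y.val + (N - x.val + R)) / N = q at hq hdiv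
    interval_cases q <;> omega
  have hinj : Set.InjOn f (Finset.univ.filter fun y : Fin N => ringDist N x y ≤ R) := by
    intro y₁ _ y₂ _ h
    have := Nat.ModEq.add_right_cancel' _ h
    exact Fin.ext (by rwa [Nat.ModEq, Nat.mod_eq_of_lt y₁.isLt, Nat.mod_eq_of_lt y₂.isLt] at this)
  simpa using Finset.card_le_card_of_injOn f hf hinj

def chainAngle (N : ℕ) (x : Fin N) : ℝ := 2 * Real.pi * (x.val + 1) / N

lemma Utw_apply_eq_twist (N : ℕ) (ψ : FockSpace (Fin N)) : Utw N ψ = twist (chainAngle N) ψ := by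
  funext S
  simp only [Utw, LinearMap.coe_mk, AddHom.coe_mk, twist, upPhase, chainAngle]
  congr 2
  push_cast
  rw [Finset.mul_sum, Finset.sum_div, Finset.sum_mul]
  refine Finset.sum_congr rfl fun m _ => ?_
  ring

lemma cos_chainAngle_sub (N : ℕ) (x y : Fin N) :
    Real.cos (chainAngle N y - chainAngle N x) = Real.cos (2 * Real.pi * ringDist N x y / N) := by
  have hN : (N : ℝ) ≠ 0 := Nat.cast_ne_zero.2 (Fin.pos x).ne'
  have hdist : Real.cos (chainAngle N y - chainAngle N x) =
      Real.cos (2 * Real.pi * Nat.dist x.val y.val / N) := by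
    rw [Nat.cast_dist]
    rcases abs_choice ((x.val : ℝ) - y.val) with h | h <;> rw [h, chainAngle, chainAngle]
    · rw [← Real.cos_neg]
      ring_nf
    · ring_nf
  have hd : Nat.dist x.val y.val ≤ N := by unfold Nat.dist; omega
  rcases min_choice (Nat.dist x.val y.val) (N - Nat.dist x.val y.val) with h | h <;>
    rw [ringDist, h, hdist]
  rw [Nat.cast_sub hd, ← Real.cos_two_pi_sub]
  congr 1
  field_simp

lemma two_sub_two_cos_chainAngle_le (N : ℕ) (x y : Fin N) :
    2 - 2 * Real.cos (chainAngle N y - chainAngle N x) ≤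
      (2 * Real.pi * ringDist N x y / N) ^ 2 := by
  rw [cos_chainAngle_sub]
  linarith [Real.one_sub_sq_div_two_le_cos (x := 2 * Real.pi * ringDist N x y / N)]

lemma re_fdot_self_nonneg (ψ : FockSpace Λ) : 0 ≤ (fdot ψ ψ).re := by
  simpa [fdot_eq_inner] using inner_self_nonneg (𝕜 := ℂ) (x := WithLp.toLp 2 ψ)

lemma norm_sum_hop_chainAngle_le {N R : ℕ} {tbar : ℝ} (hN : 0 < N) (t : Fin N → Fin N → ℝ)
    (htR : ∀ x y : Fin N, R < ringDist N x y → t x y = 0) (htb : ∀ x y, |t x y| ≤ tbar)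
    (ψ : FockSpace (Fin N)) :
    ‖∑ x, ∑ y, (t x y : ℂ) * ((2 * Real.cos (chainAngle N y - chainAngle N x) - 2 : ℝ) *
        fdot ψ ((cdag (x, true) ∘ₗ cop (y, true)) ψ))‖ ≤
      (2 * R + 1) * tbar * (2 * Real.pi * R) ^ 2 / N * (fdot ψ ψ).re := by
  have htbar : 0 ≤ tbar := (abs_nonneg _).trans (htb ⟨0, hN⟩ ⟨0, hN⟩)
  set c := tbar * ((2 * Real.pi * R / N) ^ 2 * (fdot ψ ψ).re)
  have hterm : ∀ x y : Fin N,
      ‖(t x y : ℂ) * ((2 * Real.cos (chainAngle N y - chainAngle N x) - 2 : ℝ) *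
        fdot ψ ((cdag (x, true) ∘ₗ cop (y, true)) ψ))‖ ≤ if ringDist N x y ≤ R then c else 0 := by
    intro x y
    split_ifs with hxy
    · have hcos : |2 * Real.cos (chainAngle N y - chainAngle N x) - 2| ≤
          (2 * Real.pi * R / N) ^ 2 := by
        rw [abs_of_nonpos (by linarith [Real.cos_le_one (chainAngle N y - chainAngle N x)]),
          neg_sub]
        refine (two_sub_two_cos_chainAngle_le N x y).trans ?_
        gcongr
      rw [norm_mul, norm_mul, Complex.norm_real, Complex.norm_real, Real.norm_eq_abs,
        Real.norm_eq_abs]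
      exact mul_le_mul (htb x y) (mul_le_mul hcos (norm_fdot_hop_le _ _ ψ) (norm_nonneg _)
        (sq_nonneg _)) (by positivity) htbar
    · simp [htR x y (not_le.1 hxy)]
  calc _ ≤ ∑ x : Fin N, ∑ y : Fin N, if ringDist N x y ≤ R then c else 0 :=
        norm_sum_le_of_le _ fun x _ => norm_sum_le_of_le _ fun y _ => hterm x y
    _ ≤ ∑ x : Fin N, (2 * R + 1 : ℕ) * c := by
        refine Finset.sum_le_sum fun x _ => ?_
        rw [← Finset.sum_filter, Finset.sum_const, nsmul_eq_mul]
        gcongr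
        · exact mul_nonneg htbar (mul_nonneg (sq_nonneg _) (re_fdot_self_nonneg ψ))
        · exact_mod_cast card_filter_ringDist_le N R x
    _ = _ := by
        simp only [Finset.sum_const, Finset.card_univ, Fintype.card_fin, nsmul_eq_mul, c]
        push_cast
        field_simp

/-- **Twist-operator energy estimate** (the finite-volume step of the
Yamanaka–Oshikawa–Affleck theorem).  On the periodic chain of length `N`, with
hoppings of range `R` (with respect to the distance on the ring) bounded by `t̄`,
for any normalized ground state `Φ_GS` of `H` in the `N_e`-electron sector with
ground energy `E_GS`, the twisted state `Ψ = U_tw Φ_GS` satisfies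
`⟨Ψ, HΨ⟩ − E_GS ≤ C/N`, where `C` depends only on `R`, `t̄` and the density
`ν ≥ N_e/N`, not otherwise on `N`. -/
theorem twist_energy_estimate (R : ℕ) (tbar ν : ℝ) :
    ∃ C : ℝ, ∀ (N : ℕ) (t : Fin N → Fin N → ℝ) (U : Fin N → ℝ) (Ne : ℕ)
      (Φ : FockSpace (Fin N)) (Egs : ℝ),
      0 < N → 2 * R < N →
      (∀ x y, t x y = t y x) →
      (∀ x y : Fin N,
          R < min (Nat.dist x.val y.val) (N - Nat.dist x.val y.val) → t x y = 0) →
      (∀ x y, |t x y| ≤ tbar) →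
      (Ne : ℝ) ≤ ν * N →
      fdot Φ Φ = 1 →
      Nhat Φ = ((Ne : ℝ) : ℂ) • Φ →
      Ham t U Φ = ((Egs : ℝ) : ℂ) • Φ →
      (∀ E' ∈ energies (Ham t U) Ne, Egs ≤ E') →
      (fdot (Utw N Φ) (Ham t U (Utw N Φ))).re - Egs ≤ C / N := by
  refine ⟨(2 * R + 1) * tbar * (2 * Real.pi * R) ^ 2, ?_⟩
  intro N t U Ne Φ Egs hN _ ht htR htb _ hnorm hNe hEgs hgs
  have hΦ : Φ ∈ eigR Nhat (Ne : ℝ) := Module.End.mem_eigenspace_iff.2 hNe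
  have hEΦ : fdot Φ (Ham t U Φ) = Egs := by rw [hEgs, fdot_smul_right, hnorm, mul_one]
  have hE_neg :
      Egs ≤ (fdot (twist (-chainAngle N) Φ) (Ham t U (twist (-chainAngle N) Φ))).re := by
    simpa [fdot_twist, hnorm] using
      mul_re_fdot_self_le_re_fdot_Ham ht hgs (twist_mem_eigR_Nhat (-chainAngle N) hΦ)
  have hsum := congrArg Complex.re (fdot_twist_Ham_add_fdot_twist_neg_Ham t U (chainAngle N) Φ)
  have hbound := (Complex.re_le_norm _).trans (norm_sum_hop_chainAngle_le hN t htR htb Φ)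
  rw [hEΦ, ← Complex.ofReal_ofNat, ← Complex.ofReal_mul, Complex.sub_re, Complex.add_re,
    Complex.ofReal_re] at hsum
  rw [hnorm, Complex.one_re, mul_one] at hbound
  rw [Utw_apply_eq_twist]
  linarith

end Hubbard
end
end

section
/- Flat band of the kagomé lattice. Let Λ be a finite kagomé lattice with periodic boundary conditions (|Λ| = 3L² sites), and let the hopping matrix be t_{x,y} = t > 0 for all pairs of neighboring sites x, y and t_{x,y} = 0 otherwise. Then the single-electron Schrödinger equation Σ_{y∈Λ} t_{x,y} φ_y = ε φ_x has lowest eigenvalue ε = −2t with multiplicity exactly M = (|Λ|/3) + 1 = L² + 1, and every other eigenvalue is strictly greater than −2t; that is, ε_1 = ε_2 = … = ε_M = −2t and ε_j > −2t for all j > M. -/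
/-!  Common framework: the Hubbard model on a finite lattice, formalized
concretely on the fermionic Fock space realized as `Finset (Λ × Bool) → ℂ`. -/

noncomputable section
namespace Hubbard

open scoped BigOperators

variable (Λ : Type*) [Fintype Λ] [LinearOrder Λ]

variable {Λ}

/-- The kagomé lattice on an `L × L` torus, realized as the line graph of the
honeycomb lattice: sites are the bonds of the honeycomb lattice, labelled by a
hexagonal unit cell `v ∈ (ZMod L)²` and a direction index `i ∈ Fin 3`; the bond
`(v, i)` joins the `A`-vertex `v` to the `B`-vertex `v + dvec i`. -/
def Kag (L : ℕ) : Type := (ZMod L × ZMod L) × Fin 3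

instance (L : ℕ) [NeZero L] : Fintype (Kag L) :=
  inferInstanceAs (Fintype ((ZMod L × ZMod L) × Fin 3))

instance (L : ℕ) : DecidableEq (Kag L) :=
  inferInstanceAs (DecidableEq ((ZMod L × ZMod L) × Fin 3))

/-- The displacement of the `B`-endpoint of the three bonds of a honeycomb unit cell. -/
def dvec (L : ℕ) : Fin 3 → ZMod L × ZMod L := ![(0, 0), (1, 0), (0, 1)]

/-- Two kagomé sites are neighbors iff the corresponding honeycomb bonds are
distinct and share an endpoint. -/
def kagAdj (L : ℕ) (p q : Kag L) : Prop :=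
  p ≠ q ∧ (p.1 = q.1 ∨ p.1 + dvec L p.2 = q.1 + dvec L q.2)

instance (L : ℕ) (p q : Kag L) : Decidable (kagAdj L p q) :=
  inferInstanceAs (Decidable (p ≠ q ∧ (p.1 = q.1 ∨ p.1 + dvec L p.2 = q.1 + dvec L q.2)))

/-- The kagomé hopping matrix: `t_{x,y} = t` for neighboring sites, `0` otherwise. -/
def kagT (L : ℕ) (t : ℝ) : Kag L → Kag L → ℝ := fun p q => if kagAdj L p q then t else 0

end Hubbard

/-!
The kagomé lattice is the line graph of the honeycomb lattice. If `B` is the vertex–bond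
incidence matrix of the honeycomb lattice, then `BᵀB = 2 + A` with `A` the kagomé adjacency
matrix, so the hopping matrix is `t (BᵀB - 2)`. As `BᵀB` is positive semidefinite, every
eigenvalue is at least `-2t`, and the `-2t` eigenspace is `ker B`. Rank–nullity for `B` and `Bᵀ`
gives `dim ker B = 3L² - 2L² + dim ker Bᵀ`. A vector in `ker Bᵀ` takes opposite values at the two
ends of each bond; since the honeycomb torus is connected and bipartite, `ker Bᵀ` is spanned by
the sublattice sign `±1`, whence `dim ker B = L² + 1`.
-/

open Module LinearMap

namespace Matrix

section Spectral

variable {m n K : Type*} [Fintype m] [Fintype n]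

theorem eigenspace_toLin'_smul_add_smul_one [Field K] [DecidableEq n] (A : Matrix n n K)
    {a : K} (ha : a ≠ 0) (c μ : K) :
    End.eigenspace (toLin' (a • A + c • 1)) μ = End.eigenspace (toLin' A) ((μ - c) / a) := by
  ext x
  simp only [End.mem_eigenspace_iff, toLin'_apply, add_mulVec, smul_mulVec, one_mulVec]
  rw [← eq_sub_iff_add_eq, ← sub_smul, div_eq_inv_mul, mul_smul, eq_inv_smul_iff₀ ha]

theorem nonneg_of_eigenspace_transpose_mul_self_ne_bot [Field K] [LinearOrder K]
    [IsStrictOrderedRing K] [DecidableEq n] (B : Matrix m n K) {μ : K}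
    (h : End.eigenspace (toLin' (Bᵀ * B)) μ ≠ ⊥) : 0 ≤ μ := by
  obtain ⟨x, hx, hx0⟩ := Submodule.exists_mem_ne_zero_of_ne_bot h
  rw [End.mem_eigenspace_iff, toLin'_apply] at hx
  have hquad : μ * (x ⬝ᵥ x) = B *ᵥ x ⬝ᵥ B *ᵥ x := by
    rw [← smul_eq_mul, ← dotProduct_smul, ← hx, ← mulVec_mulVec, dotProduct_mulVec,
      vecMul_transpose]
  have hpos : 0 < x ⬝ᵥ x :=
    (Fintype.sum_nonneg fun i => mul_self_nonneg (x i)).lt_of_ne'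
      (mt dotProduct_self_eq_zero.mp hx0)
  exact nonneg_of_mul_nonneg_left (hquad ▸ Fintype.sum_nonneg fun i => mul_self_nonneg _) hpos

theorem finrank_ker_mulVecLin_add_card [Field K] (B : Matrix m n K) :
    finrank K (ker B.mulVecLin) + Fintype.card m =
      finrank K (ker Bᵀ.mulVecLin) + Fintype.card n := by
  have hB := B.mulVecLin.finrank_range_add_finrank_ker
  have hBt := Bᵀ.mulVecLin.finrank_range_add_finrank_ker
  have hrank : B.rank = Bᵀ.rank := B.rank_transpose.symm
  rw [Module.finrank_fintype_fun_eq_card] at hB hBt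
  simp only [rank] at hrank
  omega

end Spectral

section Incidence

variable {W E : Type*} [DecidableEq W]

/-- Edge `e` joins the vertices `(false, ends false e)` and `(true, ends true e)`. -/
def bipartiteIncidence (R : Type*) [Zero R] [One R] (ends : Bool → E → W) :
    Matrix (Bool × W) E R :=
  of fun v e => if ends v.1 e = v.2 then 1 else 0

variable [Fintype W] {R : Type*} (ends : Bool → E → W)

theorem bipartiteIncidence_transpose_mul_self_apply [NonAssocSemiring R] (p q : E) :
    ((bipartiteIncidence R ends)ᵀ * bipartiteIncidence R ends) p q =
      ∑ b, if ends b p = ends b q then 1 else 0 := by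
  simp [bipartiteIncidence, mul_apply, Fintype.sum_prod_type]

theorem vecMul_bipartiteIncidence_apply [NonAssocSemiring R] (y : Bool × W → R) (e : E) :
    (y ᵥ* bipartiteIncidence R ends) e = ∑ b, y (b, ends b e) := by
  simp [bipartiteIncidence, vecMul, dotProduct, Fintype.sum_prod_type]

end Incidence

end Matrix

theorem ZMod.apply_eq_apply_zero_of_periodic_one {n : ℕ} [NeZero n] {X : Type*}
    {f : ZMod n → X} (hf : Function.Periodic f 1) (x : ZMod n) : f x = f 0 := by
  simpa [ZMod.natCast_zmod_val] using hf.nat_mul x.val 0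

namespace Hubbard

open Matrix Module

def honeycombEnd (L : ℕ) : Bool → Kag L → ZMod L × ZMod L
  | false, e => e.1
  | true, e => e.1 + dvec L e.2

abbrev honeycombIncidence (L : ℕ) : Matrix (Bool × (ZMod L × ZMod L)) (Kag L) ℝ :=
  bipartiteIncidence ℝ (honeycombEnd L)

variable {L : ℕ}

theorem card_kag [NeZero L] : Fintype.card (Kag L) = 3 * L ^ 2 := by
  change Fintype.card ((ZMod L × ZMod L) × Fin 3) = _
  simp only [Fintype.card_prod, ZMod.card, Fintype.card_fin]
  ring

theorem eq_of_honeycombEnd_eq (hL : 2 ≤ L) {p q : Kag L}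
    (h : ∀ b, honeycombEnd L b p = honeycombEnd L b q) : p = q := by
  have hA : p.1 = q.1 := h false
  have hB : dvec L p.2 = dvec L q.2 := by simpa [honeycombEnd, hA] using h true
  have : Fact (1 < L) := ⟨hL⟩
  have hinj : Function.Injective (dvec L) := by
    intro i j hij
    fin_cases i <;> fin_cases j <;> simp_all [dvec]
  exact Prod.ext hA (hinj hB)

variable [NeZero L]

theorem honeycombIncidence_transpose_mul_self_apply (hL : 2 ≤ L) (p q : Kag L) :
    ((honeycombIncidence L)ᵀ * honeycombIncidence L) p q =
      if p = q then 2 else if kagAdj L p q then 1 else 0 := by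
  rw [bipartiteIncidence_transpose_mul_self_apply, Fintype.sum_bool]
  by_cases hpq : p = q
  · subst hpq
    norm_num
  · have hnot : ¬ (honeycombEnd L false p = honeycombEnd L false q ∧
        honeycombEnd L true p = honeycombEnd L true q) := fun h =>
      hpq (eq_of_honeycombEnd_eq hL (Bool.forall_bool.mpr h))
    simp only [kagAdj, honeycombEnd] at hnot ⊢
    by_cases hA : p.1 = q.1 <;> by_cases hB : p.1 + dvec L p.2 = q.1 + dvec L q.2 <;>
      simp_all

theorem of_kagT_eq (hL : 2 ≤ L) (t : ℝ) :
    of (kagT L t) = t • ((honeycombIncidence L)ᵀ * honeycombIncidence L) + (-(2 * t)) • 1 := by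
  ext p q
  simp only [Matrix.add_apply, Matrix.smul_apply, honeycombIncidence_transpose_mul_self_apply hL,
    one_apply, of_apply, kagT, smul_eq_mul]
  by_cases hpq : p = q
  · simp [hpq, kagAdj]
    ring
  · split_ifs <;> simp_all

def honeycombSign (L : ℕ) : Bool × (ZMod L × ZMod L) → ℝ := fun v => if v.1 then -1 else 1

theorem ker_honeycombIncidence_transpose :
    ker (honeycombIncidence L)ᵀ.mulVecLin = Submodule.span ℝ {honeycombSign L} := by
  refine le_antisymm (fun y hy => ?_) ?_
  · have hedge (e : Kag L) : y (true, e.1 + dvec L e.2) + y (false, e.1) = 0 := by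
      simpa [vecMul_bipartiteIncidence_apply, honeycombEnd] using congrFun (mem_ker.mp hy) e
    have hB (u) : y (true, u) = -y (false, u) := by
      simpa [dvec, Prod.mk_zero_zero, eq_neg_iff_add_eq_zero] using hedge (u, 0)
    have hshift (u) (i : Fin 3) : y (false, u + dvec L i) = y (false, u) := by
      linarith [hedge (u, i), hB (u + dvec L i)]
    have hconst (a b : ZMod L) : y (false, (a, b)) = y (false, 0) :=
      calc y (false, (a, b)) = y (false, (0, b)) :=
            ZMod.apply_eq_apply_zero_of_periodic_one (f := fun a => y (false, (a, b)))
              (fun a => by simpa [dvec] using hshift (a, b) 1) a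
        _ = y (false, (0, 0)) :=
            ZMod.apply_eq_apply_zero_of_periodic_one (f := fun b => y (false, (0, b)))
              (fun b => by simpa [dvec] using hshift (0, b) 2) b
    refine Submodule.mem_span_singleton.mpr ⟨y (false, 0), funext fun ⟨c, a, b⟩ => ?_⟩
    cases c <;> simp [honeycombSign, hB, hconst]
  · rw [Submodule.span_le, Set.singleton_subset_iff, SetLike.mem_coe, mem_ker]
    ext e
    simp [vecMul_bipartiteIncidence_apply, honeycombSign]

theorem finrank_ker_honeycombIncidence :
    finrank ℝ (ker (honeycombIncidence L).mulVecLin) = L ^ 2 + 1 := by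
  have hsign : honeycombSign L ≠ 0 := fun h => by
    simpa [honeycombSign] using congrFun h (false, 0)
  have h := finrank_ker_mulVecLin_add_card (honeycombIncidence L)
  rw [ker_honeycombIncidence_transpose, finrank_span_singleton hsign, card_kag] at h
  simp only [Fintype.card_prod, Fintype.card_bool, ZMod.card, ← sq] at h
  omega

/-- **The flat band of the kagomé lattice.**
For the kagomé lattice on an `L × L` torus (`|Λ| = 3L²` sites) with hopping `t > 0`
between neighboring sites, the single-electron Schrödinger operator
`(φ_y) ↦ (Σ_y t_{x,y} φ_y)` has lowest eigenvalue `−2t`, with multiplicity exactly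
`M = |Λ|/3 + 1 = L² + 1`, and every other eigenvalue is strictly greater
than `−2t`. -/
theorem kagome_flat_band (L : ℕ) [NeZero L] (hL : 2 ≤ L) (t : ℝ) (ht : 0 < t) :
    Fintype.card (Kag L) = 3 * L ^ 2 ∧
    Module.finrank ℝ
        (Module.End.eigenspace (Matrix.toLin' (Matrix.of (kagT L t))) (-(2 * t))) =
      L ^ 2 + 1 ∧
    (∀ μ : ℝ, Module.End.eigenspace (Matrix.toLin' (Matrix.of (kagT L t))) μ ≠ ⊥ →
        -(2 * t) ≤ μ) ∧
    (∀ μ : ℝ, μ ≠ -(2 * t) →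
        Module.End.eigenspace (Matrix.toLin' (Matrix.of (kagT L t))) μ ≠ ⊥ →
        -(2 * t) < μ) := by
  have hshift (μ : ℝ) : End.eigenspace (toLin' (of (kagT L t))) μ =
      End.eigenspace (toLin' ((honeycombIncidence L)ᵀ * honeycombIncidence L))
        ((μ + 2 * t) / t) := by
    rw [of_kagT_eq hL, eigenspace_toLin'_smul_add_smul_one _ ht.ne', sub_neg_eq_add]
  have hlower (μ : ℝ) (hμ : End.eigenspace (toLin' (of (kagT L t))) μ ≠ ⊥) : -(2 * t) ≤ μ := by
    rw [hshift] at hμ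
    have := (le_div_iff₀ ht).mp (nonneg_of_eigenspace_transpose_mul_self_ne_bot _ hμ)
    linarith
  refine ⟨card_kag, ?_, hlower, fun μ hne hμ => (hlower μ hμ).lt_of_ne' hne⟩
  rw [hshift, neg_add_cancel, zero_div, End.eigenspace_zero, toLin'_apply',
    ker_mulVecLin_transpose_mul_self]
  exact finrank_ker_honeycombIncidence

end Hubbard
end
end
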